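/- arXiv:1606.04524 — 2 statements merged into one kernel-verified Lean document; each statement's English description precedes it below -/
import Mathlib

section
/- Let $a > 0$ and define $g_1(x) = (x - a x^3)\sin(x) + 2(\cos(x) - 1)$ and $g_2(x) = (x - a x^3)(\cos(x) + 1) - 2\sin(x)$. If $1 - 4\pi^2 a \geq 0$, then $g_1$ and $g_2$ have no common zero in the open interval $(\pi, 2\pi)$. -/
open Real Set

theorem stmt_0 (a : ℝ) (ha : 0 < a)
    (g₁ g₂ : ℝ → ℝ)
    (hg₁ : ∀ x, g₁ x = (x - a * x ^ 3) * Real.sin x + 2 * (Real.cos x - 1))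
    (hg₂ : ∀ x, g₂ x = (x - a * x ^ 3) * (Real.cos x + 1) - 2 * Real.sin x)
    (h : 1 - 4 * π ^ 2 * a ≥ 0) :
    ∀ x ∈ Ioo π (2 * π), ¬ (g₁ x = 0 ∧ g₂ x = 0) := by
  rintro x ⟨hx1, hx2⟩ ⟨_, hz2⟩
  have hπ : (0:ℝ) < π := Real.pi_pos
  have hx0 : 0 < x := hπ.trans hx1
  -- sin x < 0
  have hsin : Real.sin x < 0 := by
    have h1 : 0 < Real.sin (x - π) := Real.sin_pos_of_pos_of_lt_pi (by linarith) (by linarith)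
    have : Real.sin x = - Real.sin (x - π) := by
      rw [← Real.sin_add_pi]; ring_nf
    linarith
  have hcos : -1 ≤ Real.cos x := Real.neg_one_le_cos x
  -- a * x^2 < 1
  have hax : a * x ^ 2 < 1 := by
    have : x ^ 2 < (2 * π) ^ 2 := by nlinarith
    nlinarith
  have hf : 0 < x - a * x ^ 3 := by nlinarith
  have : g₂ x > 0 := by
    rw [hg₂]
    nlinarith
  linarith [hz2 ▸ this]
end

section
/- Let $a > 0$ and define $g_1(x) = (x - a x^3)\sin(x) + 2(\cos(x) - 1)$ and $g_2(x) = (x - a x^3)(\cos(x) + 1) - 2\sin(x)$. If $1 - 4\pi^2 a < 0$, then there exists a unique $x_* \in (\pi, 2\pi)$ such that $g_1(x_*) = 0$ and $g_2(x_*) = 0$. -/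
open Real Set

/-!
With `u = x - a x³`, the half-angle formulas factor both `g₁` and `g₂` through
`u cos (x/2) - 2 sin (x/2)`, so the common zeros are the zeros of this continuous function.
It equals `-2` at `π` and `2π (4π²a - 1) > 0` at `2π`, which gives a zero in `(π, 2π)`.
On that interval `cos (x/2) < 0`, so the zeros are those of `u - 2 tan (x/2)`, a strictly
decreasing function: `x - 2 tan (x/2)` has derivative `-tan² (x/2) ≤ 0` and `-a x³` is strictly
decreasing.
-/

theorem mul_sin_add_two_mul_cos_sub_one (u x : ℝ) :
    u * sin x + 2 * (cos x - 1) = 2 * sin (x / 2) * (u * cos (x / 2) - 2 * sin (x / 2)) := by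
  obtain ⟨y, rfl⟩ : ∃ y, x = 2 * y := ⟨x / 2, by ring⟩
  rw [mul_div_cancel_left₀ _ two_ne_zero, sin_two_mul, cos_two_mul]
  linear_combination 4 * sin_sq_add_cos_sq y

theorem mul_cos_add_one_sub_two_mul_sin (u x : ℝ) :
    u * (cos x + 1) - 2 * sin x = 2 * cos (x / 2) * (u * cos (x / 2) - 2 * sin (x / 2)) := by
  obtain ⟨y, rfl⟩ : ∃ y, x = 2 * y := ⟨x / 2, by ring⟩
  rw [mul_div_cancel_left₀ _ two_ne_zero, sin_two_mul, cos_two_mul]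
  ring

theorem half_angle_system_iff (u x : ℝ) :
    (u * sin x + 2 * (cos x - 1) = 0 ∧ u * (cos x + 1) - 2 * sin x = 0) ↔
      u * cos (x / 2) = 2 * sin (x / 2) := by
  rw [mul_sin_add_two_mul_cos_sub_one, mul_cos_add_one_sub_two_mul_sin]
  constructor
  · rintro ⟨hs, hc⟩
    -- `sin` and `cos` of `x / 2` do not vanish simultaneously
    linear_combination (sin (x / 2) * hs + cos (x / 2) * hc) / 2 -
      (u * cos (x / 2) - 2 * sin (x / 2)) * sin_sq_add_cos_sq (x / 2)
  · intro h
    simp [sub_eq_zero.2 h]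

theorem cos_half_neg_of_pi_lt_of_lt {x : ℝ} (h₁ : π < x) (h₂ : x < 3 * π) : cos (x / 2) < 0 :=
  cos_neg_of_pi_div_two_lt_of_lt (by linarith) (by linarith)

theorem mul_cos_half_eq_iff {u x : ℝ} (hx : cos (x / 2) ≠ 0) :
    u * cos (x / 2) = 2 * sin (x / 2) ↔ u = 2 * tan (x / 2) := by
  rw [tan_eq_sin_div_cos, mul_div_assoc', eq_div_iff hx]

theorem antitoneOn_sub_two_mul_tan_half :
    AntitoneOn (fun x => x - 2 * tan (x / 2)) (Ioo π (3 * π)) := by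
  have hderiv : ∀ x ∈ Ioo π (3 * π),
      HasDerivAt (fun x => x - 2 * tan (x / 2)) (1 - 1 / cos (x / 2) ^ 2) x := by
    intro x hx
    have hc := (cos_half_neg_of_pi_lt_of_lt hx.1 hx.2).ne
    have htan : HasDerivAt (tan ∘ fun x => x / 2) (1 / cos (x / 2) ^ 2 * (1 / 2)) x :=
      (hasDerivAt_tan hc).comp x ((hasDerivAt_id' x).div_const 2)
    exact ((hasDerivAt_id' x).sub (htan.const_mul 2)).congr_deriv (by ring)
  refine antitoneOn_of_hasDerivWithinAt_nonpos (f' := fun x => 1 - 1 / cos (x / 2) ^ 2)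
    (convex_Ioo _ _) (fun x hx => (hderiv x hx).continuousAt.continuousWithinAt) ?_ ?_
  · rw [interior_Ioo]
    exact fun x hx => (hderiv x hx).hasDerivWithinAt
  · rw [interior_Ioo]
    intro x hx
    have hc := cos_half_neg_of_pi_lt_of_lt hx.1 hx.2
    rw [sub_nonpos, le_div_iff₀ (sq_pos_of_neg hc), one_mul]
    exact cos_sq_le_one _

theorem strictAntiOn_sub_mul_pow_three_sub_two_mul_tan_half {a : ℝ} (ha : 0 < a) :
    StrictAntiOn (fun x => x - a * x ^ 3 - 2 * tan (x / 2)) (Ioo π (3 * π)) := by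
  have hcube : StrictAntiOn (fun x : ℝ => -(a * x ^ 3)) (Ioo π (3 * π)) :=
    fun x _ y _ hxy => neg_lt_neg (mul_lt_mul_of_pos_left (Odd.strictMono_pow (by decide) hxy) ha)
  convert antitoneOn_sub_two_mul_tan_half.add_strictAnti hcube using 2 with x
  ring

theorem exists_mem_Ioo_mul_cos_half_eq {u : ℝ → ℝ} (hu : Continuous u) (h : u (2 * π) < 0) :
    ∃ x ∈ Ioo π (2 * π), u x * cos (x / 2) = 2 * sin (x / 2) := by
  have hχ : Continuous fun x => u x * cos (x / 2) - 2 * sin (x / 2) := by fun_prop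
  have hmem : (0 : ℝ) ∈ Ioo (u π * cos (π / 2) - 2 * sin (π / 2))
      (u (2 * π) * cos (2 * π / 2) - 2 * sin (2 * π / 2)) := by
    simp only [mul_div_cancel_left₀ π two_ne_zero, cos_pi_div_two, sin_pi_div_two, cos_pi, sin_pi]
    constructor <;> linarith
  obtain ⟨x, hx, hx0⟩ := intermediate_value_Ioo (by linarith [pi_pos]) hχ.continuousOn hmem
  exact ⟨x, hx, sub_eq_zero.1 hx0⟩

theorem stmt_1_general (a : ℝ)
    (g₁ g₂ : ℝ → ℝ)
    (hg₁ : ∀ x, g₁ x = (x - a * x ^ 3) * Real.sin x + 2 * (Real.cos x - 1))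
    (hg₂ : ∀ x, g₂ x = (x - a * x ^ 3) * (Real.cos x + 1) - 2 * Real.sin x)
    (h : 1 - 4 * π ^ 2 * a < 0) :
    ∃! x : ℝ, x ∈ Ioo π (2 * π) ∧ g₁ x = 0 ∧ g₂ x = 0 := by
  have ha : 0 < a := by nlinarith [pi_pos]
  have hIoo : Ioo π (2 * π) ⊆ Ioo π (3 * π) := Ioo_subset_Ioo_right (by linarith [pi_pos])
  have hzeros : ∀ x, g₁ x = 0 ∧ g₂ x = 0 ↔ (x - a * x ^ 3) * cos (x / 2) = 2 * sin (x / 2) :=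
    fun x => by rw [hg₁, hg₂, half_angle_system_iff]
  have htan : ∀ x ∈ Ioo π (2 * π), (x - a * x ^ 3) * cos (x / 2) = 2 * sin (x / 2) →
      x - a * x ^ 3 - 2 * tan (x / 2) = 0 :=
    fun x hx hx₀ => sub_eq_zero.2 <|
      (mul_cos_half_eq_iff (cos_half_neg_of_pi_lt_of_lt hx.1 (hIoo hx).2).ne).1 hx₀
  obtain ⟨x, hx, hx₀⟩ := exists_mem_Ioo_mul_cos_half_eq (u := fun x => x - a * x ^ 3)
    (by fun_prop) (by nlinarith [pi_pos])
  refine ⟨x, ⟨hx, (hzeros x).2 hx₀⟩, fun y ⟨hy, hy₀⟩ => ?_⟩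
  exact (strictAntiOn_sub_mul_pow_three_sub_two_mul_tan_half ha).injOn (hIoo hy) (hIoo hx)
    ((htan y hy ((hzeros y).1 hy₀)).trans (htan x hx hx₀).symm)

theorem stmt_1 (a : ℝ) (ha : 0 < a)
    (g₁ g₂ : ℝ → ℝ)
    (hg₁ : ∀ x, g₁ x = (x - a * x ^ 3) * Real.sin x + 2 * (Real.cos x - 1))
    (hg₂ : ∀ x, g₂ x = (x - a * x ^ 3) * (Real.cos x + 1) - 2 * Real.sin x)
    (h : 1 - 4 * π ^ 2 * a < 0) :
    ∃! x : ℝ, x ∈ Ioo π (2 * π) ∧ g₁ x = 0 ∧ g₂ x = 0 :=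
  stmt_1_general a g₁ g₂ hg₁ hg₂ h
end
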